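/- arXiv:1401.1954 — 4 statements merged into one kernel-verified Lean document; each statement's English description precedes it below -/
import Mathlib

section
/- With m, ξ, ŝ(k) as in the Kou model setup (m(s) = T(σ²s²/2 + bs + λ(λ₊p/(λ₊-s) + λ₋(1-p)/(λ₋+s) - 1)), ξ = λλ₊pT, ŝ(k) = λ₊ - ξ^{1/2}k^{-1/2}), the first derivative satisfies m'(ŝ(k)) = k + O(1) as k → ∞. -/
/-!
The only term of `m'` that blows up at the pole `λ₊` is `T λ λ₊ p / (λ₊ - s)²`, and `ŝ(k)`
is chosen so that `(λ₊ - ŝ(k))² = ξ / k`, which makes this term exactly `k`. What remains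
of `m'(ŝ(k)) - k` is a function continuous at `λ₊` evaluated at `ŝ(k) → λ₊`, hence bounded.
-/

open Real Filter Asymptotics Topology

noncomputable section

def kouCgf (lamP lamM p lam σ b T s : ℝ) : ℝ :=
  T * (σ ^ 2 * s ^ 2 / 2 + b * s +
    lam * (lamP * p / (lamP - s) + lamM * (1 - p) / (lamM + s) - 1))

def kouCgfDerivRegular (lamM p lam σ b T s : ℝ) : ℝ :=
  T * (σ ^ 2 * s + b - lam * (lamM * (1 - p) / (lamM + s) ^ 2))

end

theorem hasDerivAt_const_div_sub {a c s : ℝ} (hs : s ≠ a) :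
    HasDerivAt (fun x => c / (a - x)) (c / (a - s) ^ 2) s :=
  ((hasDerivAt_const s c).fun_div ((hasDerivAt_id s).const_sub a)
    (sub_ne_zero.2 hs.symm)).congr_deriv (by simp)

theorem hasDerivAt_const_div_add {a c s : ℝ} (hs : a + s ≠ 0) :
    HasDerivAt (fun x => c / (a + x)) (-(c / (a + s) ^ 2)) s :=
  ((hasDerivAt_const s c).fun_div ((hasDerivAt_id s).const_add a) hs).congr_deriv
    (by simp [neg_div])

section Kou

variable {lamP lamM p lam σ b T s : ℝ}

theorem hasDerivAt_kouCgf (hs : s ≠ lamP) (hs' : lamM + s ≠ 0) :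
    HasDerivAt (kouCgf lamP lamM p lam σ b T)
      (T * lam * lamP * p / (lamP - s) ^ 2 + kouCgfDerivRegular lamM p lam σ b T s) s := by
  have hquad : HasDerivAt (fun x : ℝ => σ ^ 2 * x ^ 2 / 2 + b * x) (σ ^ 2 * s + b) s :=
    ((((hasDerivAt_pow 2 s).const_mul (σ ^ 2)).div_const 2).add
      ((hasDerivAt_id s).const_mul b)).congr_deriv (by
        simp only [Nat.cast_ofNat, Nat.add_one_sub_one, pow_one, mul_one, add_left_inj]; ring)
  have hjumps := ((hasDerivAt_const_div_sub (c := lamP * p) hs).add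
    (hasDerivAt_const_div_add (c := lamM * (1 - p)) hs')).sub_const 1
  exact ((hquad.add (hjumps.const_mul lam)).const_mul T).congr_deriv
    (by simp only [kouCgfDerivRegular]; ring)

theorem continuousAt_kouCgfDerivRegular (hs : lamM + s ≠ 0) :
    ContinuousAt (kouCgfDerivRegular lamM p lam σ b T) s := by
  unfold kouCgfDerivRegular
  fun_prop (disch := simpa using hs)

end Kou

theorem tendsto_sub_mul_rpow_neg_half_nhdsLT {a c : ℝ} (hc : 0 < c) :
    Tendsto (fun k : ℝ => a - c * k ^ (-(1:ℝ)/2)) atTop (𝓝[<] a) := by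
  have h0 : Tendsto (fun k : ℝ => k ^ (-(1:ℝ)/2)) atTop (𝓝 0) := by
    simpa only [neg_div] using tendsto_rpow_neg_atTop (by norm_num : (0:ℝ) < 1 / 2)
  refine tendsto_nhdsWithin_iff.2 ⟨?_, ?_⟩
  · simpa using (h0.const_mul c).const_sub a
  · filter_upwards [eventually_gt_atTop 0] with k hk
    have := rpow_pos_of_pos hk (-(1:ℝ)/2)
    simp only [Set.mem_Iio]; nlinarith

theorem div_sq_sqrt_mul_rpow_neg_half {a k : ℝ} (ha : 0 < a) (hk : 0 ≤ k) :
    a / (√a * k ^ (-(1:ℝ)/2)) ^ 2 = k := by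
  rw [mul_pow, sq_sqrt ha.le, ← rpow_natCast, ← rpow_mul hk,
    show -(1:ℝ) / 2 * (2:ℕ) = -1 by norm_num, rpow_neg_one, div_mul_eq_div_div,
    div_self ha.ne', one_div, inv_inv]

theorem kou_cgf_deriv_at_saddle_general (lamP lamM p lam σ b T : ℝ)
    (hlamP : 1 < lamP) (hlamM : 0 < lamM) (hp : p ∈ Set.Ioo (0:ℝ) 1)
    (hlam : 0 < lam) (hT : 0 < T)
    (m : ℝ → ℝ)
    (hm : ∀ s ∈ Set.Ioo (-lamM) lamP,
      m s = T * (σ ^ 2 * s ^ 2 / 2 + b * s +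
        lam * (lamP * p / (lamP - s) + lamM * (1 - p) / (lamM + s) - 1)))
    (ξ : ℝ) (hξ : ξ = lam * lamP * p * T)
    (shat : ℝ → ℝ) (hshat : ∀ k : ℝ, shat k = lamP - Real.sqrt ξ * k ^ (-(1:ℝ)/2)) :
    (fun k : ℝ => deriv m (shat k) - k) =O[atTop] (fun _ : ℝ => (1:ℝ)) := by
  have hξ0 : 0 < ξ := hξ ▸ mul_pos (mul_pos (mul_pos hlam (by linarith)) hp.1) hT
  have hshat_lim : Tendsto shat atTop (𝓝[<] lamP) := by
    simpa only [← hshat] using tendsto_sub_mul_rpow_neg_half_nhdsLT (a := lamP) (sqrt_pos.2 hξ0)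
  have hreg : ContinuousAt (kouCgfDerivRegular lamM p lam σ b T) lamP :=
    continuousAt_kouCgfDerivRegular (by linarith)
  refine ((hreg.tendsto.comp (hshat_lim.mono_right nhdsWithin_le_nhds)).isBigO_one ℝ).congr'
    ?_ EventuallyEq.rfl
  filter_upwards [hshat_lim (Ioo_mem_nhdsLT (by linarith : -lamM < lamP)),
    eventually_ge_atTop 0] with k hk hk0
  have hm_eq : m =ᶠ[𝓝 (shat k)] kouCgf lamP lamM p lam σ b T :=
    eventually_of_mem (isOpen_Ioo.mem_nhds hk) hm
  have hsing : T * lam * lamP * p / (lamP - shat k) ^ 2 = k := by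
    rw [hshat, sub_sub_cancel, show T * lam * lamP * p = ξ by rw [hξ]; ring]
    exact div_sq_sqrt_mul_rpow_neg_half hξ0 hk0
  rw [hm_eq.deriv_eq, (hasDerivAt_kouCgf hk.2.ne (by linarith [hk.1])).deriv, hsing,
    Function.comp_apply, add_sub_cancel_left]

theorem kou_cgf_deriv_at_saddle (lamP lamM p lam σ b T : ℝ)
    (hlamP : 1 < lamP) (hlamM : 0 < lamM) (hp : p ∈ Set.Ioo (0:ℝ) 1)
    (hlam : 0 < lam) (hσ : 0 < σ) (hT : 0 < T)
    (m : ℝ → ℝ)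
    (hm : ∀ s ∈ Set.Ioo (-lamM) lamP,
      m s = T * (σ ^ 2 * s ^ 2 / 2 + b * s +
        lam * (lamP * p / (lamP - s) + lamM * (1 - p) / (lamM + s) - 1)))
    (ξ : ℝ) (hξ : ξ = lam * lamP * p * T)
    (shat : ℝ → ℝ) (hshat : ∀ k : ℝ, shat k = lamP - Real.sqrt ξ * k ^ (-(1:ℝ)/2)) :
    (fun k : ℝ => deriv m (shat k) - k) =O[atTop] (fun _ : ℝ => (1:ℝ)) :=
  kou_cgf_deriv_at_saddle_general lamP lamM p lam σ b T hlamP hlamM hp hlam hT m hm ξ hξ shat hshat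
end

section
/- With m, ξ, ŝ(k) as in the Kou model setup, the second derivative satisfies m''(ŝ(k)) = 2 ξ^{-1/2} k^{3/2} + O(1) as k → ∞. -/
/-!
On the open interval `(-λ₋, λ₊)` the function `m` agrees with an explicit rational function, whose
second derivative is `T σ² + 2Tλλ₊p/(λ₊ - s)³ + 2Tλλ₋(1-p)/(λ₋ + s)³`. Since `λ₊ - ŝ(k) = √ξ k^{-1/2}`
and `Tλλ₊p = ξ`, the `λ₊`-pole term at `ŝ(k)` is exactly `2ξ^{-1/2}k^{3/2}`, while the rest converges
as `ŝ(k) → λ₊` and is therefore bounded.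
-/

open Real Filter Asymptotics Topology Set

theorem hasDerivAt_div_sub_pow (a c : ℝ) (n : ℕ) {x : ℝ} (hx : a - x ≠ 0) :
    HasDerivAt (fun s => c / (a - s) ^ n) (n * c / (a - x) ^ (n + 1)) x := by
  have h := (hasDerivAt_const x c).fun_div (((hasDerivAt_id' x).const_sub a).fun_pow n)
    (pow_ne_zero n hx)
  refine h.congr_deriv ?_
  rcases n with _ | n
  · simp
  · rw [Nat.add_sub_cancel]
    field_simp
    ring

theorem hasDerivAt_div_add_pow (a c : ℝ) (n : ℕ) {x : ℝ} (hx : a + x ≠ 0) :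
    HasDerivAt (fun s => c / (a + s) ^ n) (-(n * c) / (a + x) ^ (n + 1)) x := by
  have h := (hasDerivAt_const x c).fun_div (((hasDerivAt_id' x).const_add a).fun_pow n)
    (pow_ne_zero n hx)
  refine h.congr_deriv ?_
  rcases n with _ | n
  · simp
  · rw [Nat.add_sub_cancel]
    field_simp
    ring

theorem div_pow_three_sqrt_mul_rpow_neg_half {ξ k : ℝ} (hξ : 0 < ξ) (hk : 0 < k) :
    ξ / (√ξ * k ^ (-(1:ℝ)/2)) ^ 3 = ξ ^ (-(1:ℝ)/2) * k ^ ((3:ℝ)/2) := by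
  rw [sqrt_eq_rpow, mul_pow, ← rpow_natCast, ← rpow_natCast (k ^ _), ← rpow_mul hξ.le,
    ← rpow_mul hk.le, div_mul_eq_div_div, div_eq_mul_inv _ (k ^ _), ← rpow_neg hk.le,
    show -(1:ℝ)/2 = 1 - 1/2 * (3:ℕ) by norm_num, rpow_sub hξ, rpow_one]
  norm_num

noncomputable section Kou

variable (lamP lamM p lam σ b T : ℝ)

def kouCGF (s : ℝ) : ℝ :=
  T * (σ ^ 2 * s ^ 2 / 2 + b * s +
    lam * (lamP * p / (lamP - s) + lamM * (1 - p) / (lamM + s) - 1))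

def kouCGFDeriv (s : ℝ) : ℝ :=
  T * (σ ^ 2 * s + b + lam * (lamP * p / (lamP - s) ^ 2 - lamM * (1 - p) / (lamM + s) ^ 2))

def kouCGFDeriv2 (s : ℝ) : ℝ :=
  T * (σ ^ 2 + lam * (2 * (lamP * p) / (lamP - s) ^ 3 + 2 * (lamM * (1 - p)) / (lamM + s) ^ 3))

variable {lamP lamM}

theorem hasDerivAt_kouCGF {x : ℝ} (hP : lamP - x ≠ 0) (hM : lamM + x ≠ 0) :
    HasDerivAt (kouCGF lamP lamM p lam σ b T) (kouCGFDeriv lamP lamM p lam σ b T x) x := by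
  have hq : HasDerivAt (fun s => σ ^ 2 * s ^ 2 / 2 + b * s) (σ ^ 2 * x + b) x := by
    refine ((((hasDerivAt_pow 2 x).const_mul (σ ^ 2)).div_const 2).add
      ((hasDerivAt_id' x).const_mul b)).congr_deriv ?_
    ring
  have hPole := (hasDerivAt_div_sub_pow lamP (lamP * p) 1 hP).add
    (hasDerivAt_div_add_pow lamM (lamM * (1 - p)) 1 hM)
  simp only [pow_one, Nat.cast_one, one_mul] at hPole
  refine ((hq.add ((hPole.sub_const 1).const_mul lam)).const_mul T).congr_deriv ?_
  unfold kouCGFDeriv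
  ring

theorem hasDerivAt_kouCGFDeriv {x : ℝ} (hP : lamP - x ≠ 0) (hM : lamM + x ≠ 0) :
    HasDerivAt (kouCGFDeriv lamP lamM p lam σ b T) (kouCGFDeriv2 lamP lamM p lam σ T x) x := by
  have hPole := (hasDerivAt_div_sub_pow lamP (lamP * p) 2 hP).sub
    (hasDerivAt_div_add_pow lamM (lamM * (1 - p)) 2 hM)
  refine ((((hasDerivAt_id' x).const_mul (σ ^ 2)).add_const b).add
    (hPole.const_mul lam)).const_mul T |>.congr_deriv ?_
  unfold kouCGFDeriv2
  ring

theorem deriv_deriv_kouCGF {x : ℝ} (hx : x ∈ Ioo (-lamM) lamP) :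
    deriv (deriv (kouCGF lamP lamM p lam σ b T)) x = kouCGFDeriv2 lamP lamM p lam σ T x := by
  have hne : ∀ y ∈ Ioo (-lamM) lamP, lamP - y ≠ 0 ∧ lamM + y ≠ 0 := fun y hy =>
    ⟨sub_ne_zero.2 hy.2.ne', by linarith [hy.1]⟩
  have hDeriv : EqOn (deriv (kouCGF lamP lamM p lam σ b T)) (kouCGFDeriv lamP lamM p lam σ b T)
      (Ioo (-lamM) lamP) := fun y hy =>
    (hasDerivAt_kouCGF p lam σ b T (hne y hy).1 (hne y hy).2).deriv
  rw [hDeriv.deriv isOpen_Ioo hx]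
  exact (hasDerivAt_kouCGFDeriv p lam σ b T (hne x hx).1 (hne x hx).2).deriv

end Kou

theorem kou_cgf_second_deriv_at_saddle_general (lamP lamM p lam σ b T : ℝ)
    (hlamP : 1 < lamP) (hlamM : 0 < lamM) (hp : p ∈ Set.Ioo (0:ℝ) 1)
    (hlam : 0 < lam) (hT : 0 < T)
    (m : ℝ → ℝ)
    (hm : ∀ s ∈ Set.Ioo (-lamM) lamP,
      m s = T * (σ ^ 2 * s ^ 2 / 2 + b * s +
        lam * (lamP * p / (lamP - s) + lamM * (1 - p) / (lamM + s) - 1)))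
    (ξ : ℝ) (hξ : ξ = lam * lamP * p * T)
    (shat : ℝ → ℝ) (hshat : ∀ k : ℝ, shat k = lamP - Real.sqrt ξ * k ^ (-(1:ℝ)/2)) :
    (fun k : ℝ => deriv (deriv m) (shat k) - 2 * ξ ^ (-(1:ℝ)/2) * k ^ ((3:ℝ)/2))
      =O[atTop] (fun _ : ℝ => (1:ℝ)) := by
  have hlamP0 : 0 < lamP := by linarith
  have hξpos : 0 < ξ := by rw [hξ]; have := hp.1; positivity
  have hm'' := ((show EqOn m (kouCGF lamP lamM p lam σ b T) (Ioo (-lamM) lamP) from hm).deriv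
    isOpen_Ioo).deriv isOpen_Ioo
  have hgap : Tendsto (fun k : ℝ => √ξ * k ^ (-(1:ℝ)/2)) atTop (𝓝 0) := by
    simpa [neg_div] using (tendsto_rpow_neg_atTop (y := 1/2) (by norm_num)).const_mul √ξ
  have hshat_lim : Tendsto shat atTop (𝓝 lamP) := by
    simpa [funext hshat] using (tendsto_const_nhds (x := lamP)).sub hgap
  have key : (fun k => deriv (deriv m) (shat k) - 2 * ξ ^ (-(1:ℝ)/2) * k ^ ((3:ℝ)/2))
      =ᶠ[atTop] fun k => T * (σ ^ 2 + lam * (2 * (lamM * (1 - p)) / (lamM + shat k) ^ 3)) := by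
    filter_upwards [eventually_gt_atTop 0, hgap.eventually_lt_const (by linarith : 0 < lamP + lamM)]
      with k hk hgap_lt
    have hgap_pos : 0 < √ξ * k ^ (-(1:ℝ)/2) := by positivity
    have hs : shat k ∈ Ioo (-lamM) lamP := by rw [hshat]; constructor <;> linarith
    rw [hm'' hs, deriv_deriv_kouCGF p lam σ b T hs, kouCGFDeriv2, mul_assoc 2,
      ← div_pow_three_sqrt_mul_rpow_neg_half hξpos hk, hshat, sub_sub_cancel, hξ]
    ring
  refine key.trans_isBigO (Tendsto.isBigO_one ℝ
    (c := T * (σ ^ 2 + lam * (2 * (lamM * (1 - p)) / (lamM + lamP) ^ 3))) ?_)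
  exact tendsto_const_nhds.mul (tendsto_const_nhds.add (tendsto_const_nhds.mul
    (tendsto_const_nhds.div ((tendsto_const_nhds.add hshat_lim).pow 3) (by positivity))))

theorem kou_cgf_second_deriv_at_saddle (lamP lamM p lam σ b T : ℝ)
    (hlamP : 1 < lamP) (hlamM : 0 < lamM) (hp : p ∈ Set.Ioo (0:ℝ) 1)
    (hlam : 0 < lam) (hσ : 0 < σ) (hT : 0 < T)
    (m : ℝ → ℝ)
    (hm : ∀ s ∈ Set.Ioo (-lamM) lamP,
      m s = T * (σ ^ 2 * s ^ 2 / 2 + b * s +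
        lam * (lamP * p / (lamP - s) + lamM * (1 - p) / (lamM + s) - 1)))
    (ξ : ℝ) (hξ : ξ = lam * lamP * p * T)
    (shat : ℝ → ℝ) (hshat : ∀ k : ℝ, shat k = lamP - Real.sqrt ξ * k ^ (-(1:ℝ)/2)) :
    (fun k : ℝ => deriv (deriv m) (shat k) - 2 * ξ ^ (-(1:ℝ)/2) * k ^ ((3:ℝ)/2))
      =O[atTop] (fun _ : ℝ => (1:ℝ)) :=
  kou_cgf_second_deriv_at_saddle_general lamP lamM p lam σ b T hlamP hlamM hp hlam hT m hm ξ hξ shat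
    hshat
end

section
/- Let m(s) = T(σ²s²/2 + bs + λ(exp(δ²s²/2 + μs) - 1)) with δ, σ, λ, T > 0, μ, b ∈ ℝ, and let ŝ(k) solve m'(ŝ(k)) = k. Then as k → ∞, ŝ(k) = √(2 log k)/δ - μ/δ² + O(log log k / √(log k)). -/
/-!
The substitution `u = δ s + μ / δ` completes the square in the exponent and turns `m'` into
`A u + B + C u exp (u ^ 2 / 2)` with `A ≥ 0`, `C > 0`, a strictly increasing function. Put
`x = log k`, `r = √(2x)` and `η = log x / r`. At `u = r + η` the Gaussian factor is at least
`exp x` while `C u → ∞`, so the value exceeds `k`; at `u = r - η` the exponent is `x - log x + η²/2`,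
so the Gaussian term is `O(exp x / √x)` and the value is below `k`. By monotonicity the saddle
point lies within `η = O(log log k / √(log k))` of `r`.
-/

open Real Filter Asymptotics

noncomputable def reducedSaddleMap (A B C u : ℝ) : ℝ :=
  A * u + B + C * u * exp (u ^ 2 / 2)

namespace reducedSaddleMap

variable {A B C : ℝ}

lemma hasDerivAt (u : ℝ) :
    HasDerivAt (reducedSaddleMap A B C) (A + C * (1 + u ^ 2) * exp (u ^ 2 / 2)) u := by
  have hexp : HasDerivAt (fun u : ℝ => exp (u ^ 2 / 2)) (u * exp (u ^ 2 / 2)) u :=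
    ((hasDerivAt_pow 2 u).div_const 2).exp.congr_deriv (by push_cast; ring)
  exact ((((hasDerivAt_id' u).const_mul A).add_const B).add
    (((hasDerivAt_id' u).const_mul C).mul hexp)).congr_deriv (by ring)

lemma strictMono (hA : 0 ≤ A) (hC : 0 < C) : StrictMono (reducedSaddleMap A B C) :=
  strictMono_of_deriv_pos fun u => by
    rw [(hasDerivAt u).deriv]
    positivity

lemma apply_sub_log_div_le_exp {r x : ℝ} (hA : 0 ≤ A) (hC : 0 < C) (hx : 1 ≤ x) (hr₀ : 0 ≤ r)
    (hr : r ^ 2 = 2 * x) (hAB : 4 * (A + |B|) ≤ r) (hCe : 4 * C * exp 1 ≤ r) :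
    reducedSaddleMap A B C (r - log x / r) ≤ exp x := by
  have hx₀ : 0 < x := by linarith
  have hr₁ : 1 ≤ r := by nlinarith
  set ℓ := log x
  set η := ℓ / r with hη
  have hℓ₀ : 0 ≤ ℓ := log_nonneg hx
  have hℓ_sqrt : ℓ ≤ 2 * √x := by
    have := log_le_rpow_div hx₀.le one_half_pos
    rw [sqrt_eq_rpow]
    linarith
  have hℓ_sq : ℓ ^ 2 ≤ 2 * r ^ 2 := by nlinarith [sq_sqrt hx₀.le]
  have hrη : r * η = ℓ := mul_div_cancel₀ ℓ (by positivity)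
  have hη₀ : 0 ≤ η := by positivity
  have hηr : η ≤ r := by
    rw [hη, div_le_iff₀ (by positivity)]
    nlinarith [log_le_sub_one_of_pos hx₀]
  have hη_sq : η ^ 2 ≤ 2 := by
    rw [hη, div_pow, div_le_iff₀ (by positivity)]
    exact hℓ_sq
  have hexp : exp ((r - η) ^ 2 / 2) ≤ exp 1 * exp x / x :=
    calc exp ((r - η) ^ 2 / 2) ≤ exp (x - ℓ + 1) := exp_le_exp.2 (by nlinarith)
      _ = exp 1 * exp x / x := by rw [exp_add, exp_sub, exp_log hx₀]; ring
  have hgauss : C * (r - η) * exp ((r - η) ^ 2 / 2) ≤ exp x / 2 :=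
    calc C * (r - η) * exp ((r - η) ^ 2 / 2) ≤ C * r * (exp 1 * exp x / x) :=
          mul_le_mul (mul_le_mul_of_nonneg_left (by linarith) hC.le) hexp (exp_pos _).le
            (by positivity)
      _ = 4 * C * exp 1 / r * exp x / 2 := by field_simp; nlinarith
      _ ≤ exp x / 2 := by
          gcongr
          exact mul_le_of_le_one_left (exp_pos x).le ((div_le_one (by positivity)).2 hCe)
  have haffine : A * (r - η) + B ≤ exp x / 2 := by
    nlinarith [add_one_le_exp x, le_abs_self B, mul_le_mul_of_nonneg_left hη₀ hA,
      mul_le_mul_of_nonneg_left hAB hr₀, mul_le_mul_of_nonneg_left hr₁ (abs_nonneg B)]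
  unfold reducedSaddleMap
  linarith

lemma exp_le_apply_add_log_div {r x : ℝ} (hA : 0 ≤ A) (hx : 1 ≤ x) (hr₀ : 0 ≤ r)
    (hr : r ^ 2 = 2 * x) (hCB : 1 + |B| ≤ C * r) :
    exp x ≤ reducedSaddleMap A B C (r + log x / r) := by
  have hη : 0 ≤ log x / r := div_nonneg (log_nonneg hx) hr₀
  have hexp : exp x ≤ exp ((r + log x / r) ^ 2 / 2) :=
    exp_le_exp.mpr (by nlinarith)
  have hC : 0 ≤ C := by
    by_contra! h
    nlinarith [abs_nonneg B]
  have hexp_term : exp x + |B| ≤ C * (r + log x / r) * exp ((r + log x / r) ^ 2 / 2) :=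
    calc exp x + |B| ≤ (1 + |B|) * exp x := by
          nlinarith [mul_nonneg (abs_nonneg B) (sub_nonneg.2 (one_le_exp (by linarith : 0 ≤ x)))]
      _ ≤ C * r * exp x := by gcongr
      _ ≤ C * (r + log x / r) * exp ((r + log x / r) ^ 2 / 2) := by gcongr; linarith
  unfold reducedSaddleMap
  nlinarith [neg_abs_le B, mul_nonneg hA (add_nonneg hr₀ hη)]

theorem isBigO_sub_sqrt_two_mul_log (hA : 0 ≤ A) (hC : 0 < C) {u : ℝ → ℝ}
    (hu : ∀ᶠ k in atTop, reducedSaddleMap A B C (u k) = k) :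
    (fun k => u k - √(2 * log k)) =O[atTop] (fun k => log (log k) / √(log k)) := by
  have hr : Tendsto (fun x : ℝ => √(2 * x)) atTop atTop :=
    tendsto_sqrt_atTop.comp (tendsto_id.const_mul_atTop two_pos)
  have bracket : ∀ᶠ x : ℝ in atTop,
      reducedSaddleMap A B C (√(2 * x) - log x / √(2 * x)) ≤ exp x ∧
        exp x ≤ reducedSaddleMap A B C (√(2 * x) + log x / √(2 * x)) := by
    filter_upwards [eventually_ge_atTop 1, hr.eventually_ge_atTop (4 * (A + |B|)),
      hr.eventually_ge_atTop (4 * C * exp 1), hr.eventually_ge_atTop ((1 + |B|) / C)]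
      with x hx hAB hCe hCB
    have hr₂ : √(2 * x) ^ 2 = 2 * x := sq_sqrt (by linarith)
    exact ⟨apply_sub_log_div_le_exp hA hC hx (sqrt_nonneg _) hr₂ hAB hCe,
      exp_le_apply_add_log_div hA hx (sqrt_nonneg _) hr₂ ((div_le_iff₀' hC).1 hCB)⟩
  refine IsBigO.of_bound 1 ?_
  filter_upwards [hu, tendsto_log_atTop.eventually bracket, eventually_gt_atTop 0,
    tendsto_log_atTop.eventually_ge_atTop 1] with k hk ⟨hlow, hup⟩ hk₀ hlogk
  rw [exp_log hk₀] at hlow hup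
  replace hlow := (strictMono hA hC).le_iff_le.1 (hlow.trans hk.ge)
  replace hup := (strictMono hA hC).le_iff_le.1 (hk.le.trans hup)
  have hη : log (log k) / √(2 * log k) ≤ log (log k) / √(log k) :=
    div_le_div_of_nonneg_left (log_nonneg hlogk) (sqrt_pos.2 (by linarith))
      (sqrt_le_sqrt (by linarith))
  rw [one_mul, norm_of_nonneg (div_nonneg (log_nonneg hlogk) (sqrt_nonneg _)), norm_eq_abs,
    abs_le]
  constructor <;> linarith

end reducedSaddleMap

lemma hasDerivAt_mertonCumulant {δ : ℝ} (μ σ b lam T s : ℝ) (hδ : δ ≠ 0) :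
    HasDerivAt (fun s => T * (σ ^ 2 * s ^ 2 / 2 + b * s +
      lam * (exp (δ ^ 2 * s ^ 2 / 2 + μ * s) - 1)))
      (reducedSaddleMap (T * σ ^ 2 / δ) (T * (b - σ ^ 2 * μ / δ ^ 2))
        (T * lam * δ * exp (-(μ ^ 2 / (2 * δ ^ 2)))) (δ * s + μ / δ)) s := by
  have hquad : HasDerivAt (fun s => δ ^ 2 * s ^ 2 / 2 + μ * s) (δ ^ 2 * s + μ) s := by
    refine ((((hasDerivAt_pow 2 s).const_mul (δ ^ 2)).div_const 2).add
      ((hasDerivAt_id' s).const_mul μ)).congr_deriv ?_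
    push_cast
    ring
  have hexp : exp (-(μ ^ 2 / (2 * δ ^ 2))) * exp ((δ * s + μ / δ) ^ 2 / 2)
      = exp (δ ^ 2 * s ^ 2 / 2 + μ * s) := by
    rw [← exp_add]
    congr 1
    field_simp
    ring
  refine (((((hasDerivAt_pow 2 s).const_mul (σ ^ 2)).div_const 2).add
    ((hasDerivAt_id' s).const_mul b)).add ((hquad.exp.sub_const 1).const_mul lam)).const_mul T
    |>.congr_deriv ?_
  rw [reducedSaddleMap, ← hexp]
  push_cast
  field_simp
  ring

theorem merton_saddle_asymptotics_general (δ μ σ b lam T : ℝ)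
    (hδ : 0 < δ) (hlam : 0 < lam) (hT : 0 < T)
    (m : ℝ → ℝ)
    (hm : ∀ s : ℝ, m s = T * (σ ^ 2 * s ^ 2 / 2 + b * s +
      lam * (Real.exp (δ ^ 2 * s ^ 2 / 2 + μ * s) - 1)))
    (shat : ℝ → ℝ) (hshat : ∀ᶠ k : ℝ in atTop, deriv m (shat k) = k) :
    (fun k : ℝ => shat k - (Real.sqrt (2 * Real.log k) / δ - μ / δ ^ 2))
      =O[atTop] (fun k : ℝ => Real.log (Real.log k) / Real.sqrt (Real.log k)) := by
  have hderiv (s : ℝ) : deriv m s =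
      reducedSaddleMap (T * σ ^ 2 / δ) (T * (b - σ ^ 2 * μ / δ ^ 2))
        (T * lam * δ * exp (-(μ ^ 2 / (2 * δ ^ 2)))) (δ * s + μ / δ) := by
    rw [funext hm]
    exact (hasDerivAt_mertonCumulant μ σ b lam T s hδ.ne').deriv
  have hu := reducedSaddleMap.isBigO_sub_sqrt_two_mul_log (by positivity) (by positivity)
    (u := fun k => δ * shat k + μ / δ) (hshat.mono fun k hk => (hderiv _).symm.trans hk)
  refine (hu.const_mul_left δ⁻¹).congr_left fun k => ?_
  field_simp
  ring

theorem merton_saddle_asymptotics (δ μ σ b lam T : ℝ)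
    (hδ : 0 < δ) (hσ : 0 < σ) (hlam : 0 < lam) (hT : 0 < T)
    (m : ℝ → ℝ)
    (hm : ∀ s : ℝ, m s = T * (σ ^ 2 * s ^ 2 / 2 + b * s +
      lam * (Real.exp (δ ^ 2 * s ^ 2 / 2 + μ * s) - 1)))
    (shat : ℝ → ℝ) (hshat : ∀ᶠ k : ℝ in atTop, deriv m (shat k) = k) :
    (fun k : ℝ => shat k - (Real.sqrt (2 * Real.log k) / δ - μ / δ ^ 2))
      =O[atTop] (fun k : ℝ => Real.log (Real.log k) / Real.sqrt (Real.log k)) :=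
  merton_saddle_asymptotics_general δ μ σ b lam T hδ hlam hT m hm shat hshat
end

section
/- Let m(s) = T(σ²s²/2 + bs + λ(exp(δ²s²/2 + μs) - 1)) with δ, σ, λ, T > 0, μ, b ∈ ℝ, and ŝ(k) the solution of m'(ŝ(k)) = k. Then as k → ∞: m(ŝ(k)) = (k/(δ√(2 log k)))(1 + O(log log k / log k)) and m''(ŝ(k)) = δ k √(2 log k) (1 + O(1/√(log k))). -/
open Real Filter Asymptotics
open scoped Topology

/-!
Write `X = δ² s + μ`. The derivative `m'(s) = T (σ² s + b) + T λ X e^{(X² - μ²)/(2δ²)}` is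
strictly increasing, and where `X = δ √(2y)` it equals `O(√y) + T λ e^{-μ²/(2δ²)} δ √(2y) e^y`.
This exceeds `k` for `y = log k` and is below `k` for `y = log k - log log k`, where
`e^y = k / log k`. So `X(ŝ(k)) = ρ(k) δ √(2 log k)` with `ρ ≤ 1` and
`1 - ρ ≤ 1 - ρ² ≤ log log k / log k`. Eliminating the exponential with the saddle equation
`m'(ŝ) = k` writes both normalised quantities as `(1 - ρ) / ρ`, resp. `ρ - 1`, plus terms that
are polylogarithmic over `k` or `O(1 / log k)`.
-/

theorem isLittleO_sqrt_two_mul : (fun x : ℝ => √(2 * x)) =o[atTop] id := by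
  have hlin : (fun x : ℝ => 2 * x) =o[atTop] fun x => x ^ 2 := by
    simpa using (isLittleO_pow_pow_atTop_of_lt (𝕜 := ℝ) one_lt_two).const_mul_left 2
  refine (hlin.sqrt (Eventually.of_forall fun x => sq_nonneg x)).congr' EventuallyEq.rfl ?_
  filter_upwards [eventually_ge_atTop (0 : ℝ)] with x hx using sqrt_sq hx

theorem tendsto_sqrt_two_mul_log_atTop : Tendsto (fun k => √(2 * log k)) atTop atTop :=
  tendsto_sqrt_atTop.comp (tendsto_log_atTop.const_mul_atTop two_pos)

theorem tendsto_one_div_sqrt_log : Tendsto (fun k => 1 / √(log k)) atTop (𝓝 0) := by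
  simpa only [one_div, Function.comp_def] using
    tendsto_inv_atTop_zero.comp (tendsto_sqrt_atTop.comp tendsto_log_atTop)

theorem isBigO_one_log : (fun _ => (1 : ℝ)) =O[atTop] log :=
  (isLittleO_const_id_atTop 1).isBigO.comp_tendsto tendsto_log_atTop

theorem isBigO_log_div_self_one_div_sqrt :
    (fun x : ℝ => log x / x) =O[atTop] fun x => 1 / √x := by
  refine IsBigO.of_bound 2 ?_
  filter_upwards [eventually_ge_atTop 1] with x hx
  have hlog : log x ≤ 2 * √x := by
    have := log_le_rpow_div (by linarith : 0 ≤ x) one_half_pos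
    rw [← sqrt_eq_rpow] at this
    linarith
  have hsx : 0 < √x := sqrt_pos.2 (by linarith)
  rw [norm_eq_abs, norm_eq_abs, abs_of_nonneg (div_nonneg (log_nonneg hx) (by linarith)),
    abs_of_pos (one_div_pos.2 hsx), div_le_iff₀ (by linarith)]
  calc log x ≤ 2 * √x := hlog
    _ = 2 * (1 / √x) * x := by field_simp; rw [sq_sqrt (by linarith)]

theorem isBigO_log_log_div_log_one_div_sqrt_log :
    (fun k => log (log k) / log k) =O[atTop] fun k => 1 / √(log k) :=
  isBigO_log_div_self_one_div_sqrt.comp_tendsto tendsto_log_atTop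

theorem isBigO_one_div_log_log_log_div_log :
    (fun k => 1 / log k) =O[atTop] fun k => log (log k) / log k := by
  refine IsBigO.of_bound' ?_
  filter_upwards [tendsto_log_atTop.eventually_ge_atTop (exp 1)] with k hk
  have hL : 0 < log k := (exp_pos 1).trans_le hk
  have hLL : 1 ≤ log (log k) := by rwa [le_log_iff_exp_le hL]
  rw [norm_eq_abs, norm_eq_abs, abs_of_pos (one_div_pos.2 hL),
    abs_of_pos (div_pos (by linarith) hL)]
  gcongr

theorem isLittleO_log_pow_div_self (n : ℕ) :
    (fun k => log k ^ n / k) =o[atTop] fun k => 1 / log k := by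
  refine ((isLittleO_pow_log_id_atTop (n := n + 1)).mul_isBigO
    (isBigO_refl (fun k => 1 / (k * log k)) atTop)).congr' ?_ ?_
  all_goals
    filter_upwards [eventually_gt_atTop 1] with k hk
    have : log k ≠ 0 := (log_pos hk).ne'
    field_simp
    simp [pow_succ']

theorem isBigO_div_self_of_isBigO_log_pow {f : ℝ → ℝ} {n : ℕ}
    (hf : f =O[atTop] fun k => log k ^ n) :
    (fun k => f k / k) =O[atTop] fun k => 1 / log k := by
  simpa only [div_eq_mul_inv] using
    (hf.mul (isBigO_refl (fun k : ℝ => k⁻¹) atTop)).trans (isLittleO_log_pow_div_self n).isBigO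

theorem isBigO_const_mul_add {α : Type*} {l : Filter α} {f g : α → ℝ} (hf : f =O[l] g)
    (hg : (fun _ => (1 : ℝ)) =O[l] g) (a c : ℝ) : (fun x => a * f x + c) =O[l] g :=
  (hf.const_mul_left a).add ((isBigO_const_one ℝ c l).trans hg)

theorem isBigO_one_sub_of_sq_bounds {ρ : ℝ → ℝ}
    (hρ : ∀ᶠ k in atTop, 0 ≤ ρ k ∧ ρ k ≤ 1 ∧ 1 - log (log k) / log k ≤ ρ k ^ 2) :
    (fun k => 1 - ρ k) =O[atTop] fun k => log (log k) / log k := by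
  refine IsBigO.of_bound' ?_
  filter_upwards [hρ] with k ⟨h0, h1, h2⟩
  rw [norm_eq_abs, norm_eq_abs, abs_of_nonneg (by linarith)]
  nlinarith [le_abs_self (log (log k) / log k)]

theorem tendsto_of_isBigO_one_sub {ρ : ℝ → ℝ}
    (hρ : (fun k => 1 - ρ k) =O[atTop] fun k => log (log k) / log k) :
    Tendsto ρ atTop (𝓝 1) := by
  have h := (hρ.trans isBigO_log_log_div_log_one_div_sqrt_log).trans_tendsto
    tendsto_one_div_sqrt_log
  simpa using (tendsto_const_nhds (x := (1 : ℝ))).sub h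

namespace Merton

variable (δ μ σ b lam T : ℝ)

noncomputable def cgf (s : ℝ) : ℝ :=
  T * (σ ^ 2 * s ^ 2 / 2 + b * s + lam * (exp (δ ^ 2 * s ^ 2 / 2 + μ * s) - 1))

noncomputable def cgfDeriv (s : ℝ) : ℝ :=
  T * (σ ^ 2 * s + b) + T * lam * ((δ ^ 2 * s + μ) * exp (δ ^ 2 * s ^ 2 / 2 + μ * s))

noncomputable def cgfDeriv2 (s : ℝ) : ℝ :=
  T * σ ^ 2 + T * lam * (((δ ^ 2 * s + μ) ^ 2 + δ ^ 2) * exp (δ ^ 2 * s ^ 2 / 2 + μ * s))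

theorem hasDerivAt_exp_jump (s : ℝ) :
    HasDerivAt (fun x => exp (δ ^ 2 * x ^ 2 / 2 + μ * x))
      ((δ ^ 2 * s + μ) * exp (δ ^ 2 * s ^ 2 / 2 + μ * s)) s :=
  ((((hasDerivAt_pow 2 s).const_mul (δ ^ 2)).div_const 2).add
    ((hasDerivAt_id s).const_mul μ)).exp.congr_deriv (by simp only [id, Pi.add_apply]; ring)

theorem hasDerivAt_cgf (s : ℝ) :
    HasDerivAt (cgf δ μ σ b lam T) (cgfDeriv δ μ σ b lam T s) s :=
  (((((hasDerivAt_pow 2 s).const_mul (σ ^ 2)).div_const 2).add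
    ((hasDerivAt_id s).const_mul b)).add
    (((hasDerivAt_exp_jump δ μ s).sub_const 1).const_mul lam)).const_mul T |>.congr_deriv
    (by simp only [cgfDeriv]; ring)

theorem hasDerivAt_cgfDeriv (s : ℝ) :
    HasDerivAt (cgfDeriv δ μ σ b lam T) (cgfDeriv2 δ μ σ lam T s) s :=
  ((((hasDerivAt_id s).const_mul (σ ^ 2)).add_const b).const_mul T).add
    (((((hasDerivAt_id s).const_mul (δ ^ 2)).add_const μ).mul
      (hasDerivAt_exp_jump δ μ s)).const_mul (T * lam)) |>.congr_deriv
    (by simp only [cgfDeriv2, id]; ring)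

theorem strictMono_cgfDeriv (hδ : δ ≠ 0) (hlam : 0 < lam) (hT : 0 < T) :
    StrictMono (cgfDeriv δ μ σ b lam T) :=
  strictMono_of_deriv_pos fun s => by
    rw [(hasDerivAt_cgfDeriv δ μ σ b lam T s).deriv, cgfDeriv2]
    positivity

noncomputable def levelPoint (y : ℝ) : ℝ := (δ * √(2 * y) - μ) / δ ^ 2

theorem levelPoint_spec (hδ : δ ≠ 0) (y : ℝ) :
    δ ^ 2 * levelPoint δ μ y + μ = δ * √(2 * y) := by
  rw [levelPoint]; field_simp; ring

theorem cgfDeriv_levelPoint (hδ : δ ≠ 0) {y : ℝ} (hy : 0 ≤ y) :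
    cgfDeriv δ μ σ b lam T (levelPoint δ μ y) =
      T * σ ^ 2 / δ * √(2 * y) + T * (b - σ ^ 2 * μ / δ ^ 2)
        + T * lam * exp (-(μ ^ 2 / (2 * δ ^ 2))) * δ * √(2 * y) * exp y := by
  have hexp : δ ^ 2 * levelPoint δ μ y ^ 2 / 2 + μ * levelPoint δ μ y =
      y + -(μ ^ 2 / (2 * δ ^ 2)) := by
    have hsq : √(2 * y) ^ 2 = 2 * y := sq_sqrt (by positivity)
    rw [levelPoint]; field_simp; linear_combination δ ^ 2 * hsq
  rw [cgfDeriv, levelPoint_spec δ μ hδ, hexp, exp_add, levelPoint]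
  field_simp
  ring

theorem eventually_le_cgfDeriv_levelPoint_log (hδ : 0 < δ) (hlam : 0 < lam) (hT : 0 < T) :
    ∀ᶠ k in atTop, k ≤ cgfDeriv δ μ σ b lam T (levelPoint δ μ (log k)) := by
  have hκ : 0 < T * lam * exp (-(μ ^ 2 / (2 * δ ^ 2))) * δ := by positivity
  filter_upwards [tendsto_sqrt_two_mul_log_atTop.eventually_ge_atTop
      (2 / (T * lam * exp (-(μ ^ 2 / (2 * δ ^ 2))) * δ)),
    eventually_ge_atTop |T * (b - σ ^ 2 * μ / δ ^ 2)|, eventually_ge_atTop 1] with k hW hk hk1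
  rw [cgfDeriv_levelPoint δ μ σ b lam T hδ.ne' (log_nonneg hk1), exp_log (by linarith)]
  rw [div_le_iff₀ hκ] at hW
  have hdiffusion : 0 ≤ T * σ ^ 2 / δ * √(2 * log k) := by positivity
  have hjump := mul_le_mul_of_nonneg_right hW (by linarith : (0 : ℝ) ≤ k)
  have hdrift := neg_abs_le (T * (b - σ ^ 2 * μ / δ ^ 2))
  nlinarith

theorem eventually_cgfDeriv_levelPoint_le (hδ : 0 < δ) (hlam : 0 ≤ lam) (hT : 0 ≤ T) :
    ∀ᶠ k in atTop, cgfDeriv δ μ σ b lam T (levelPoint δ μ (log k - log (log k))) ≤ k := by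
  have hsqrt_log : (fun k => √(2 * log k)) =o[atTop] log :=
    isLittleO_sqrt_two_mul.comp_tendsto tendsto_log_atTop
  have hdrift : (fun k => T * σ ^ 2 / δ * √(2 * log k) + T * (b - σ ^ 2 * μ / δ ^ 2))
      =o[atTop] id :=
    ((hsqrt_log.trans isLittleO_log_id_atTop).const_mul_left _).add (isLittleO_const_id_atTop _)
  have hjump : Tendsto
      (fun k => T * lam * exp (-(μ ^ 2 / (2 * δ ^ 2))) * δ * (√(2 * log k) / log k))
      atTop (𝓝 0) := by
    simpa using hsqrt_log.tendsto_div_nhds_zero.const_mul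
      (T * lam * exp (-(μ ^ 2 / (2 * δ ^ 2))) * δ)
  filter_upwards [hdrift.bound (by norm_num : (0 : ℝ) < 1 / 2),
    hjump.eventually (ge_mem_nhds (by norm_num : (0 : ℝ) < 1 / 2)),
    tendsto_log_atTop.eventually_ge_atTop 1, eventually_gt_atTop 0] with k hd hj hL hk
  have hLL : 0 ≤ log (log k) := log_nonneg hL
  have hLLL : log (log k) ≤ log k := (log_le_sub_one_of_pos (by linarith)).trans (by linarith)
  rw [cgfDeriv_levelPoint δ μ σ b lam T hδ.ne' (by linarith), exp_sub, exp_log hk,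
    exp_log (by linarith)]
  have hW : √(2 * (log k - log (log k))) ≤ √(2 * log k) := sqrt_le_sqrt (by linarith)
  rw [norm_eq_abs, norm_eq_abs, id, abs_of_pos hk] at hd
  have hdrift_le : T * σ ^ 2 / δ * √(2 * (log k - log (log k))) + T * (b - σ ^ 2 * μ / δ ^ 2)
      ≤ k / 2 := by
    have := le_abs_self (T * σ ^ 2 / δ * √(2 * log k) + T * (b - σ ^ 2 * μ / δ ^ 2))
    have : T * σ ^ 2 / δ * √(2 * (log k - log (log k))) ≤ T * σ ^ 2 / δ * √(2 * log k) := by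
      gcongr
    linarith
  have hjump_le : T * lam * exp (-(μ ^ 2 / (2 * δ ^ 2))) * δ * √(2 * (log k - log (log k))) *
      (k / log k) ≤ k / 2 := calc
    _ ≤ T * lam * exp (-(μ ^ 2 / (2 * δ ^ 2))) * δ * √(2 * log k) * (k / log k) := by gcongr
    _ = T * lam * exp (-(μ ^ 2 / (2 * δ ^ 2))) * δ * (√(2 * log k) / log k) * k := by ring
    _ ≤ 1 / 2 * k := by gcongr
    _ = k / 2 := by ring
  linarith

abbrev SaddleBracket (shat : ℝ → ℝ) : Prop :=
  ∀ᶠ k in atTop, δ * √(2 * (log k - log (log k))) ≤ δ ^ 2 * shat k + μ ∧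
    δ ^ 2 * shat k + μ ≤ δ * √(2 * log k)

theorem saddleBracket_of_cgfDeriv_eq (hδ : 0 < δ) (hlam : 0 < lam) (hT : 0 < T) {shat : ℝ → ℝ}
    (hshat : ∀ᶠ k in atTop, cgfDeriv δ μ σ b lam T (shat k) = k) :
    SaddleBracket δ μ shat := by
  have hmono := strictMono_cgfDeriv δ μ σ b lam T hδ.ne' hlam hT
  filter_upwards [hshat, eventually_le_cgfDeriv_levelPoint_log δ μ σ b lam T hδ hlam hT,
    eventually_cgfDeriv_levelPoint_le δ μ σ b lam T hδ hlam.le hT.le] with k hk hup hlow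
  rw [← levelPoint_spec δ μ hδ.ne', ← levelPoint_spec δ μ hδ.ne']
  constructor <;> gcongr
  exacts [hmono.le_iff_le.1 (hlow.trans_eq hk.symm), hmono.le_iff_le.1 (hk.trans_le hup)]

noncomputable def saddleRatio (shat : ℝ → ℝ) (k : ℝ) : ℝ :=
  (δ ^ 2 * shat k + μ) / (δ * √(2 * log k))

theorem saddleRatio_mul (hδ : δ ≠ 0) (shat : ℝ → ℝ) {k : ℝ} (hk : 1 < k) :
    δ ^ 2 * shat k + μ = saddleRatio δ μ shat k * (δ * √(2 * log k)) :=
  (div_mul_cancel₀ _ (mul_ne_zero hδ (sqrt_pos.2 (by linarith [log_pos hk])).ne')).symm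

theorem eventually_saddleRatio_bounds (hδ : 0 < δ) {shat : ℝ → ℝ}
    (hbracket : SaddleBracket δ μ shat) :
    ∀ᶠ k in atTop, 0 ≤ saddleRatio δ μ shat k ∧ saddleRatio δ μ shat k ≤ 1 ∧
      1 - log (log k) / log k ≤ saddleRatio δ μ shat k ^ 2 := by
  filter_upwards [hbracket, tendsto_log_atTop.eventually_gt_atTop 0] with k ⟨hlo, hup⟩ hL
  have hLL : log (log k) ≤ log k := (log_le_sub_one_of_pos hL).trans (by linarith)
  have hlo0 : 0 ≤ δ * √(2 * (log k - log (log k))) := by positivity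
  have hW : 0 < δ * √(2 * log k) := by positivity
  refine ⟨div_nonneg (hlo0.trans hlo) hW.le, div_le_one_of_le₀ hup hW.le, ?_⟩
  have hsq := pow_le_pow_left₀ hlo0 hlo 2
  rw [mul_pow, sq_sqrt (by linarith)] at hsq
  rw [saddleRatio, div_pow, mul_pow, sq_sqrt (by linarith), le_div_iff₀ (by positivity)]
  calc (1 - log (log k) / log k) * (δ ^ 2 * (2 * log k))
      = δ ^ 2 * (2 * (log k - log (log k))) := by field_simp
    _ ≤ _ := hsq

theorem isBigO_log_of_saddleBracket (hδ : 0 < δ) {shat : ℝ → ℝ}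
    (hbracket : SaddleBracket δ μ shat) :
    shat =O[atTop] log := by
  have hX : (fun k => δ ^ 2 * shat k + μ) =O[atTop] fun k => √(2 * log k) := by
    refine IsBigO.of_bound δ ?_
    filter_upwards [hbracket] with k ⟨hlo, hup⟩
    have hlo0 : 0 ≤ δ * √(2 * (log k - log (log k))) := by positivity
    rw [norm_eq_abs, norm_eq_abs, abs_of_nonneg (hlo0.trans hlo), abs_of_nonneg (sqrt_nonneg _)]
    exact hup
  have hW := (isLittleO_sqrt_two_mul.comp_tendsto tendsto_log_atTop).isBigO
  have hμ := (isLittleO_const_id_atTop μ).isBigO.comp_tendsto tendsto_log_atTop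
  refine (((hX.trans hW).sub hμ).const_mul_left (δ ^ 2)⁻¹).congr_left fun k => ?_
  simp only [Function.comp_apply]
  field_simp
  ring

theorem isBigO_drift_div_self (hδ : 0 < δ) {shat : ℝ → ℝ}
    (hbracket : SaddleBracket δ μ shat) :
    (fun k => T * (σ ^ 2 * shat k + b) / k) =O[atTop] fun k => 1 / log k :=
  isBigO_div_self_of_isBigO_log_pow <|
    (isBigO_const_mul_add (isBigO_log_of_saddleBracket δ μ hδ hbracket) isBigO_one_log
      (T * σ ^ 2) (T * b)).congr (fun k => by ring) (fun k => (pow_one _).symm)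

theorem cgf_div_sub_one_eq {s k W ρ : ℝ} (hs : cgfDeriv δ μ σ b lam T s = k) (hk : k ≠ 0)
    (hρ : ρ ≠ 0) (hX : δ ^ 2 * s + μ = ρ * (δ * W)) :
    cgf δ μ σ b lam T s / (k / (δ * W)) - 1 =
      (T * (σ ^ 2 * s ^ 2 / 2 + b * s) - T * lam) * (δ * W) / k + (1 - ρ) / ρ
        - T * (σ ^ 2 * s + b) / k / ρ := by
  rw [cgfDeriv, hX] at hs
  rw [cgf]
  generalize exp (δ ^ 2 * s ^ 2 / 2 + μ * s) = E at hs ⊢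
  field_simp
  linear_combination 2 * hs

theorem cgfDeriv2_div_sub_one_eq {s k W ρ : ℝ} (hs : cgfDeriv δ μ σ b lam T s = k) (hk : k ≠ 0)
    (hδ : δ ≠ 0) (hW : W ≠ 0) (hρ : ρ ≠ 0) (hX : δ ^ 2 * s + μ = ρ * (δ * W)) :
    cgfDeriv2 δ μ σ lam T s / (δ * k * W) - 1 =
      T * σ ^ 2 / (δ * k * W) - (1 - ρ) + 1 / (ρ * W ^ 2)
        - (ρ + 1 / (ρ * W ^ 2)) * (T * (σ ^ 2 * s + b) / k) := by
  rw [cgfDeriv, hX] at hs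
  rw [cgfDeriv2, hX]
  generalize exp (δ ^ 2 * s ^ 2 / 2 + μ * s) = E at hs ⊢
  field_simp
  linear_combination δ * (ρ ^ 2 * W ^ 2 + 1) * hs

theorem isBigO_cgf_saddle (hδ : 0 < δ) {shat : ℝ → ℝ}
    (hshat : ∀ᶠ k in atTop, cgfDeriv δ μ σ b lam T (shat k) = k)
    (hbracket : SaddleBracket δ μ shat) :
    (fun k => cgf δ μ σ b lam T (shat k) / (k / (δ * √(2 * log k))) - 1) =O[atTop]
      fun k => log (log k) / log k := by
  have h1ρ := isBigO_one_sub_of_sq_bounds (eventually_saddleRatio_bounds δ μ hδ hbracket)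
  have hρ := tendsto_of_isBigO_one_sub h1ρ
  have hρinv := (hρ.inv₀ one_ne_zero).isBigO_one ℝ
  have hs := isBigO_log_of_saddleBracket δ μ hδ hbracket
  have hW : (fun k => √(2 * log k)) =O[atTop] log :=
    (isLittleO_sqrt_two_mul.comp_tendsto tendsto_log_atTop).isBigO
  have hquad : (fun k => (T * (σ ^ 2 * shat k ^ 2 / 2 + b * shat k) - T * lam) *
      (δ * √(2 * log k))) =O[atTop] fun k => log k ^ 3 :=
    ((isBigO_const_mul_add
      (hs.mul (isBigO_const_mul_add hs isBigO_one_log (T * σ ^ 2 / 2) (T * b)))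
      (isBigO_one_log.mul isBigO_one_log |>.congr_left fun _ => one_mul 1) 1 (-(T * lam))).mul
      (hW.const_mul_left δ)).congr (fun k => by ring) (fun k => by ring)
  have hinv_log := isBigO_one_div_log_log_log_div_log
  refine (((isBigO_div_self_of_isBigO_log_pow hquad).trans hinv_log).add
    ((h1ρ.mul hρinv).congr (fun k => (div_eq_mul_inv _ _).symm) fun k => mul_one _) |>.sub
    (((isBigO_drift_div_self δ μ σ b T hδ hbracket).mul hρinv).trans
      (hinv_log.congr_left fun k => (mul_one _).symm))).congr' ?_ EventuallyEq.rfl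
  filter_upwards [hshat, hρ.eventually_ne one_ne_zero, eventually_gt_atTop 1] with k hk hρk hk1
  exact (cgf_div_sub_one_eq δ μ σ b lam T hk (by linarith) hρk
    (saddleRatio_mul δ μ hδ.ne' shat hk1)).symm

theorem isBigO_cgfDeriv2_saddle (hδ : 0 < δ) {shat : ℝ → ℝ}
    (hshat : ∀ᶠ k in atTop, cgfDeriv δ μ σ b lam T (shat k) = k)
    (hbracket : SaddleBracket δ μ shat) :
    (fun k => cgfDeriv2 δ μ σ lam T (shat k) / (δ * k * √(2 * log k)) - 1) =O[atTop]
      fun k => 1 / √(log k) := by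
  have h1ρ := isBigO_one_sub_of_sq_bounds (eventually_saddleRatio_bounds δ μ hδ hbracket)
  have hρ := tendsto_of_isBigO_one_sub h1ρ
  have hρinv := (hρ.inv₀ one_ne_zero).isBigO_one ℝ
  have hinv_log :=
    isBigO_one_div_log_log_log_div_log.trans isBigO_log_log_div_log_one_div_sqrt_log
  have hinv_log_one : (fun k => 1 / log k) =O[atTop] fun _ => (1 : ℝ) := by
    simpa only [one_div, Function.comp_def] using
      (tendsto_inv_atTop_zero.comp tendsto_log_atTop).isBigO_one ℝ
  have hdiffusion : (fun k => T * σ ^ 2 / (δ * √(2 * log k))) =O[atTop] fun k => log k ^ 0 :=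
    ((((tendsto_sqrt_two_mul_log_atTop.const_mul_atTop hδ).inv_tendsto_atTop).const_mul
      (T * σ ^ 2)).isBigO_one ℝ).congr (fun k => (div_eq_mul_inv _ _).symm)
      fun k => (pow_zero _).symm
  have hinv_sq : (fun k => 1 / (saddleRatio δ μ shat k * √(2 * log k) ^ 2)) =O[atTop]
      fun k => 1 / log k := by
    refine (hρinv.mul ((isBigO_refl (fun k => 1 / log k) atTop).const_mul_left (1 / 2))).congr'
      ?_ (Eventually.of_forall fun k => one_mul _)
    filter_upwards [tendsto_log_atTop.eventually_gt_atTop 0] with k hk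
    rw [sq_sqrt (by linarith)]
    ring
  refine ((((isBigO_div_self_of_isBigO_log_pow hdiffusion).trans hinv_log).sub
    (h1ρ.trans isBigO_log_log_div_log_one_div_sqrt_log) |>.add (hinv_sq.trans hinv_log)).sub
    ((((hρ.isBigO_one ℝ).add (hinv_sq.trans hinv_log_one)).mul
      (isBigO_drift_div_self δ μ σ b T hδ hbracket)).trans
      (hinv_log.congr_left fun k => (one_mul _).symm))).congr' ?_ EventuallyEq.rfl
  filter_upwards [hshat, hρ.eventually_ne one_ne_zero, eventually_gt_atTop 1] with k hk hρk hk1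
  rw [cgfDeriv2_div_sub_one_eq δ μ σ b lam T hk (by linarith) hδ.ne'
    (sqrt_pos.2 (by linarith [log_pos hk1])).ne' hρk (saddleRatio_mul δ μ hδ.ne' shat hk1)]
  ring

end Merton

theorem merton_cgf_at_saddle_general (δ μ σ b lam T : ℝ)
    (hδ : 0 < δ) (hlam : 0 < lam) (hT : 0 < T)
    (m : ℝ → ℝ)
    (hm : ∀ s : ℝ, m s = T * (σ ^ 2 * s ^ 2 / 2 + b * s +
      lam * (Real.exp (δ ^ 2 * s ^ 2 / 2 + μ * s) - 1)))
    (shat : ℝ → ℝ) (hshat : ∀ᶠ k : ℝ in atTop, deriv m (shat k) = k) :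
    (fun k : ℝ => m (shat k) / (k / (δ * Real.sqrt (2 * Real.log k))) - 1)
      =O[atTop] (fun k : ℝ => Real.log (Real.log k) / Real.log k) ∧
    (fun k : ℝ => deriv (deriv m) (shat k) / (δ * k * Real.sqrt (2 * Real.log k)) - 1)
      =O[atTop] (fun k : ℝ => 1 / Real.sqrt (Real.log k)) := by
  obtain rfl : m = Merton.cgf δ μ σ b lam T := funext hm
  have hderiv : deriv (Merton.cgf δ μ σ b lam T) = Merton.cgfDeriv δ μ σ b lam T :=
    funext fun s => (Merton.hasDerivAt_cgf δ μ σ b lam T s).deriv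
  have hderiv2 : deriv (Merton.cgfDeriv δ μ σ b lam T) = Merton.cgfDeriv2 δ μ σ lam T :=
    funext fun s => (Merton.hasDerivAt_cgfDeriv δ μ σ b lam T s).deriv
  rw [hderiv] at hshat
  rw [hderiv, hderiv2]
  have hbracket := Merton.saddleBracket_of_cgfDeriv_eq δ μ σ b lam T hδ hlam hT hshat
  exact ⟨Merton.isBigO_cgf_saddle δ μ σ b lam T hδ hshat hbracket,
    Merton.isBigO_cgfDeriv2_saddle δ μ σ b lam T hδ hshat hbracket⟩

theorem merton_cgf_at_saddle (δ μ σ b lam T : ℝ)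
    (hδ : 0 < δ) (hσ : 0 < σ) (hlam : 0 < lam) (hT : 0 < T)
    (m : ℝ → ℝ)
    (hm : ∀ s : ℝ, m s = T * (σ ^ 2 * s ^ 2 / 2 + b * s +
      lam * (Real.exp (δ ^ 2 * s ^ 2 / 2 + μ * s) - 1)))
    (shat : ℝ → ℝ) (hshat : ∀ᶠ k : ℝ in atTop, deriv m (shat k) = k) :
    (fun k : ℝ => m (shat k) / (k / (δ * Real.sqrt (2 * Real.log k))) - 1)
      =O[atTop] (fun k : ℝ => Real.log (Real.log k) / Real.log k) ∧
    (fun k : ℝ => deriv (deriv m) (shat k) / (δ * k * Real.sqrt (2 * Real.log k)) - 1)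
      =O[atTop] (fun k : ℝ => 1 / Real.sqrt (Real.log k)) :=
  merton_cgf_at_saddle_general δ μ σ b lam T hδ hlam hT m hm shat hshat
end
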